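/- arXiv:2108.13932 — 7 statements merged into one kernel-verified Lean document; each statement's English description precedes it below -/
import Mathlib

section
/- The entanglement kernel is an order ideal of A_R: if k ∈ K_ω satisfies 0 ≤ k, and a ∈ A_R satisfies 0 ≤ a and a ≤ k, then a ∈ K_ω. -/
open ComplexOrder

/-- A state on a unital C*-algebra: a `ℂ`-linear functional `ω` with `ω 1 = 1` such that
`ω (star a * a)` is a nonnegative real number for every `a`. -/
def IsState {C : Type*} [NormedRing C] [StarRing C] [NormedAlgebra ℂ C]
    (ω : C →ₗ[ℂ] ℂ) : Prop :=
  ω 1 = 1 ∧ ∀ a : C, 0 ≤ ω (star a * a)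

/-- The entanglement kernel of a state `ω`:
`K_ω = {a ∈ A_R : ω (x * a) = 0 for all x ∈ A_L}`. -/
def entKer {C : Type*} [NormedRing C] [StarRing C] [NormedAlgebra ℂ C]
    [StarModule ℂ C] (AL AR : StarSubalgebra ℂ C) (ω : C →ₗ[ℂ] ℂ) : Set C :=
  {a : C | a ∈ AR ∧ ∀ x ∈ AL, ω (x * a) = 0}

/-! Taking `x = 1` gives `ω k = 0`, so positivity of `ω` squeezes `0 ≤ ω a ≤ ω k = 0`.
In a star-ordered ring `a` is a sum of elements `star s * s`, each of which is then killed by `ω`,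
and the degenerate case of the Cauchy–Schwarz inequality for the positive form
`(b, c) ↦ ω (star b * c)` turns `ω (star s * s) = 0` into
`ω (x * star s * s) = ω (star (s * star x) * s) = 0`. -/

lemma Complex.eq_zero_of_forall_nonneg_add_ofReal_mul {b u : ℂ}
    (h : ∀ r : ℝ, 0 ≤ b + r * u) : u = 0 := by
  have hre (r : ℝ) : 0 ≤ b.re + r * u.re := by simpa using (Complex.le_def.1 (h r)).1
  have him (r : ℝ) : b.im + r * u.im = 0 := by simpa [eq_comm] using (Complex.le_def.1 (h r)).2
  apply Complex.ext
  · by_contra hu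
    have := hre (-(b.re + 1) / u.re)
    rw [div_mul_cancel₀ _ hu] at this
    linarith
  · rw [Complex.zero_im]
    linarith [him 0, him 1]

namespace LinearMap

variable {R : Type*} [Ring R] [StarRing R] [Algebra ℂ R] {ω : R →ₗ[ℂ] ℂ}

lemma apply_star_mul_eq_zero_of_apply_star_mul_self_eq_zero [StarModule ℂ R]
    (hω : ∀ a : R, 0 ≤ ω (star a * a)) {c : R} (hc : ω (star c * c) = 0) (b : R) :
    ω (star b * c) = 0 := by
  set z := ω (star b * c)
  set w := ω (star c * b)
  have hexpand (s : ℂ) : ω (star (b + s • c) * (b + s • c))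
      = ω (star b * b) + (s * z + star s * w) := by
    simp only [star_add, star_smul, add_mul, mul_add, smul_mul_assoc, mul_smul_comm,
      map_add, map_smul, hc, smul_eq_mul, mul_zero, add_zero]
    ring
  have hvanish (t : ℂ) : t * z + star t * w = 0 := by
    refine Complex.eq_zero_of_forall_nonneg_add_ofReal_mul (b := ω (star b * b)) fun r ↦ ?_
    calc 0 ≤ ω (star (b + ((r : ℂ) * t) • c) * (b + ((r : ℂ) * t) • c)) := hω _
      _ = ω (star b * b) + r * (t * z + star t * w) := by
        rw [hexpand, star_mul', Complex.star_def, Complex.conj_ofReal]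
        ring
  have h1 : z + w = 0 := by simpa using hvanish 1
  have hI : Complex.I * z - Complex.I * w = 0 := by
    simpa [Complex.star_def, sub_eq_add_neg] using hvanish Complex.I
  linear_combination (h1 - Complex.I * hI) / 2 + (z - w) / 2 * Complex.I_sq

lemma apply_nonneg_of_nonneg [PartialOrder R] [StarOrderedRing R]
    (hω : ∀ a : R, 0 ≤ ω (star a * a)) {p : R} (hp : 0 ≤ p) : 0 ≤ ω p := by
  rw [StarOrderedRing.nonneg_iff] at hp
  induction hp using AddSubmonoid.closure_induction with
  | mem _ h => obtain ⟨s, rfl⟩ := h; exact hω s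
  | zero => rw [map_zero]
  | add _ _ _ _ hp hq => rw [map_add]; exact add_nonneg hp hq

lemma apply_mul_eq_zero_of_nonneg_of_apply_eq_zero [StarModule ℂ R] [PartialOrder R]
    [StarOrderedRing R] (hω : ∀ a : R, 0 ≤ ω (star a * a)) {p : R} (hp : 0 ≤ p)
    (hωp : ω p = 0) (x : R) : ω (x * p) = 0 := by
  rw [StarOrderedRing.nonneg_iff] at hp
  induction hp using AddSubmonoid.closure_induction generalizing x with
  | mem _ h =>
    obtain ⟨s, rfl⟩ := h
    simpa [mul_assoc] using
      apply_star_mul_eq_zero_of_apply_star_mul_self_eq_zero hω hωp (s * star x)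
  | zero => rw [mul_zero, map_zero]
  | add p q hp hq ihp ihq =>
    have hωp0 := apply_nonneg_of_nonneg hω (StarOrderedRing.nonneg_iff.2 hp)
    have hωq0 := apply_nonneg_of_nonneg hω (StarOrderedRing.nonneg_iff.2 hq)
    obtain ⟨hωp', hωq'⟩ :=
      (add_eq_zero_iff_of_nonneg hωp0 hωq0).1 (by rwa [map_add] at hωp)
    rw [mul_add, map_add, ihp hωp', ihq hωq', add_zero]

end LinearMap

theorem entKer_orderIdeal_general {C : Type*} [NormedRing C] [StarRing C]
    [NormedAlgebra ℂ C] [StarModule ℂ C]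
    [PartialOrder C] [StarOrderedRing C]
    (AL AR : StarSubalgebra ℂ C)
    (ω : C →ₗ[ℂ] ℂ) (hω : IsState ω) :
    ∀ k ∈ entKer AL AR ω, 0 ≤ k →
      ∀ a ∈ AR, 0 ≤ a → a ≤ k → a ∈ entKer AL AR ω := by
  intro k ⟨_, hk⟩ _ a haR ha hak
  have hωk : ω k = 0 := by simpa using hk 1 AL.one_mem
  have hωa : ω a = 0 := by
    refine le_antisymm ?_ (LinearMap.apply_nonneg_of_nonneg hω.2 ha)
    have := LinearMap.apply_nonneg_of_nonneg hω.2 (sub_nonneg.2 hak)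
    rwa [map_sub, hωk, zero_sub, neg_nonneg] at this
  exact ⟨haR, fun x _ ↦
    LinearMap.apply_mul_eq_zero_of_nonneg_of_apply_eq_zero hω.2 ha hωa x⟩

/-- The entanglement kernel is an order ideal of `A_R`. -/
theorem entKer_orderIdeal {C : Type*} [NormedRing C] [StarRing C] [CStarRing C]
    [NormedAlgebra ℂ C] [StarModule ℂ C] [CompleteSpace C]
    [PartialOrder C] [StarOrderedRing C]
    (AL AR : StarSubalgebra ℂ C)
    (hL : IsClosed (AL : Set C)) (hR : IsClosed (AR : Set C))
    (ω : C →ₗ[ℂ] ℂ) (hω : IsState ω)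
    (hcomm : ∀ x ∈ AL, ∀ y ∈ AR, x * y = y * x) :
    ∀ k ∈ entKer AL AR ω, 0 ≤ k →
      ∀ a ∈ AR, 0 ≤ a → a ≤ k → a ∈ entKer AL AR ω :=
  entKer_orderIdeal_general AL AR ω hω
end

section
/- The entanglement kernel can be computed using only positive elements on which ω does not vanish: K_ω = {a ∈ A_R : ω(x * a) = 0 for every x ∈ A_L with 0 ≤ x and ω(x) ≠ 0}. -/
open ComplexOrder

/-! The map `x ↦ ω (x * a)` is `ℂ`-linear, so it vanishes on `A_L` once it vanishes on the
positive elements of `A_L`: every `x` is `ℜ x + I • ℑ x`, and a self-adjoint `y` is the difference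
of the positive elements `‖y‖ + y` and `‖y‖`. A positive `p` with `ω p = 0` is reached through
`p + 1`, on which `ω` takes the value `ω 1 = 1`, using that `ω (1 * a) = 0`. -/

open scoped ComplexStarModule

theorem Subsemiring.map_eq_zero_of_nonneg_of_map_ne_zero {A M N : Type*} [Semiring A]
    [PartialOrder A] [AddLeftMono A] [ZeroLEOneClass A] [AddCommMonoid M] [AddCommMonoid N]
    {S : Subsemiring A} {ω : A →+ N} (hω : ω 1 ≠ 0) {f : A →+ M}
    (hf : ∀ p ∈ S, 0 ≤ p → ω p ≠ 0 → f p = 0) {p : A} (hp : p ∈ S) (hp₀ : 0 ≤ p) :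
    f p = 0 := by
  have hf₁ : f 1 = 0 := hf 1 S.one_mem zero_le_one hω
  by_cases hωp : ω p = 0
  · have : ω (p + 1) ≠ 0 := by rwa [map_add, hωp, zero_add]
    simpa [hf₁] using hf (p + 1) (S.add_mem hp S.one_mem) (add_nonneg hp₀ zero_le_one) this
  · exact hf p hp hp₀ hωp

theorem StarSubalgebra.realPart_mem {A : Type*} [Ring A] [StarRing A] [Algebra ℂ A]
    [StarModule ℂ A] {S : StarSubalgebra ℂ A} {x : A} (hx : x ∈ S) : (ℜ x : A) ∈ S :=
  map_realPart S.subtype ⟨x, hx⟩ ▸ (ℜ (⟨x, hx⟩ : S) : S).2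

theorem StarSubalgebra.imaginaryPart_mem {A : Type*} [Ring A] [StarRing A] [Algebra ℂ A]
    [StarModule ℂ A] {S : StarSubalgebra ℂ A} {x : A} (hx : x ∈ S) : (ℑ x : A) ∈ S :=
  map_imaginaryPart S.subtype ⟨x, hx⟩ ▸ (ℑ (⟨x, hx⟩ : S) : S).2

theorem StarSubalgebra.map_eq_zero_of_forall_nonneg {A M : Type*} [CStarAlgebra A]
    [PartialOrder A] [StarOrderedRing A] [AddCommGroup M] [Module ℂ M]
    {S : StarSubalgebra ℂ A} {f : A →ₗ[ℂ] M} (hf : ∀ p ∈ S, 0 ≤ p → f p = 0)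
    {x : A} (hx : x ∈ S) : f x = 0 := by
  have selfAdjoint : ∀ y ∈ S, IsSelfAdjoint y → f y = 0 := by
    intro y hy hy_sa
    set r := algebraMap ℝ A ‖y‖ with hr_def
    have hr : r ∈ S := by
      rw [hr_def, IsScalarTower.algebraMap_apply ℝ ℂ A]
      exact S.algebraMap_mem _
    have hr₀ : 0 ≤ r := algebraMap_nonneg A (norm_nonneg y)
    have hry₀ : 0 ≤ r + y := neg_le_iff_add_nonneg'.mp hy_sa.neg_algebraMap_norm_le_self
    calc f y = f (r + y) - f r := by rw [map_add, add_sub_cancel_left]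
      _ = 0 := by rw [hf _ (S.add_mem hr hy) hry₀, hf r hr hr₀, sub_zero]
  rw [← realPart_add_I_smul_imaginaryPart x, map_add, map_smul,
    selfAdjoint _ (S.realPart_mem hx) (ℜ x).2, selfAdjoint _ (S.imaginaryPart_mem hx) (ℑ x).2,
    smul_zero, add_zero]

theorem entKer_eq_of_pos_ne_zero_general {C : Type*} [NormedRing C] [StarRing C] [CStarRing C]
    [NormedAlgebra ℂ C] [StarModule ℂ C] [CompleteSpace C]
    [PartialOrder C] [StarOrderedRing C]
    (AL AR : StarSubalgebra ℂ C)
    (ω : C →ₗ[ℂ] ℂ) (hω : IsState ω) :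
    entKer AL AR ω =
      {a : C | a ∈ AR ∧ ∀ x ∈ AL, 0 ≤ x → ω x ≠ 0 → ω (x * a) = 0} := by
  let _ : CStarAlgebra C := {}
  ext a
  refine ⟨fun ⟨haR, h⟩ => ⟨haR, fun x hx _ _ => h x hx⟩, fun ⟨haR, h⟩ => ⟨haR, fun x hx => ?_⟩⟩
  have hω₁ : ω 1 ≠ 0 := by simp [hω.1]
  set g := ω ∘ₗ LinearMap.mulRight ℂ a
  refine AL.map_eq_zero_of_forall_nonneg (f := g) (fun p hp hp₀ => ?_) hx
  exact Subsemiring.map_eq_zero_of_nonneg_of_map_ne_zero (S := AL.toSubalgebra.toSubsemiring)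
    (ω := ω.toAddMonoidHom) hω₁ (f := g.toAddMonoidHom) h hp hp₀

/-- The entanglement kernel can be computed using only positive elements of `A_L`
on which `ω` does not vanish. -/
theorem entKer_eq_of_pos_ne_zero {C : Type*} [NormedRing C] [StarRing C] [CStarRing C]
    [NormedAlgebra ℂ C] [StarModule ℂ C] [CompleteSpace C]
    [PartialOrder C] [StarOrderedRing C]
    (AL AR : StarSubalgebra ℂ C)
    (hL : IsClosed (AL : Set C)) (hR : IsClosed (AR : Set C))
    (ω : C →ₗ[ℂ] ℂ) (hω : IsState ω) :
    entKer AL AR ω =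
      {a : C | a ∈ AR ∧ ∀ x ∈ AL, 0 ≤ x → ω x ≠ 0 → ω (x * a) = 0} :=
  entKer_eq_of_pos_ne_zero_general AL AR ω hω
end

section
/- The induced functional ω̄ is positive on the image of the positive cone: for every a ∈ A_R such that a + k is positive in C for some k ∈ K_ω, the value ω(a) is a nonnegative real number. -/
open ComplexOrder

theorem AddMonoidHom.map_nonneg_of_map_star_mul_self_nonneg {R M : Type*} [NonUnitalSemiring R]
    [PartialOrder R] [StarRing R] [StarOrderedRing R] [AddCommMonoid M] [PartialOrder M]
    [IsOrderedAddMonoid M] (f : R →+ M) (hf : ∀ a, 0 ≤ f (star a * a)) {x : R} (hx : 0 ≤ x) :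
    0 ≤ f x := by
  refine AddSubmonoid.closure_induction ?_ (by simp) ?_ (StarOrderedRing.nonneg_iff.mp hx)
  · rintro _ ⟨s, rfl⟩
    exact hf s
  · intro x y _ _ hx hy
    rw [map_add]
    exact add_nonneg hx hy

theorem IsState.map_nonneg {C : Type*} [NormedRing C] [StarRing C] [NormedAlgebra ℂ C]
    [PartialOrder C] [StarOrderedRing C] {ω : C →ₗ[ℂ] ℂ} (hω : IsState ω) {x : C} (hx : 0 ≤ x) :
    0 ≤ ω x :=
  ω.toAddMonoidHom.map_nonneg_of_map_star_mul_self_nonneg hω.2 hx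

theorem apply_eq_zero_of_mem_entKer {C : Type*} [NormedRing C] [StarRing C] [NormedAlgebra ℂ C]
    [StarModule ℂ C] {AL AR : StarSubalgebra ℂ C} {ω : C →ₗ[ℂ] ℂ} {k : C}
    (hk : k ∈ entKer AL AR ω) : ω k = 0 := by
  simpa using hk.2 1 AL.one_mem

theorem omega_bar_pos_general {C : Type*} [NormedRing C] [StarRing C]
    [NormedAlgebra ℂ C] [StarModule ℂ C]
    [PartialOrder C] [StarOrderedRing C]
    (AL AR : StarSubalgebra ℂ C)
    (ω : C →ₗ[ℂ] ℂ) (hω : IsState ω) :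
    ∀ a ∈ AR, ∀ k ∈ entKer AL AR ω, 0 ≤ a + k → 0 ≤ ω a := by
  intro a _ k hk hpos
  simpa [apply_eq_zero_of_mem_entKer hk] using hω.map_nonneg hpos

/-- The induced functional is positive on the image of the positive cone: if `a ∈ A_R`
and `a + k` is positive for some `k ∈ K_ω`, then `ω a` is a nonnegative real number. -/
theorem omega_bar_pos {C : Type*} [NormedRing C] [StarRing C] [CStarRing C]
    [NormedAlgebra ℂ C] [StarModule ℂ C] [CompleteSpace C]
    [PartialOrder C] [StarOrderedRing C]
    (AL AR : StarSubalgebra ℂ C)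
    (hL : IsClosed (AL : Set C)) (hR : IsClosed (AR : Set C))
    (ω : C →ₗ[ℂ] ℂ) (hω : IsState ω) :
    ∀ a ∈ AR, ∀ k ∈ entKer AL AR ω, 0 ≤ a + k → 0 ≤ ω a :=
  omega_bar_pos_general AL AR ω hω
end

section
/- The functional Γ is dominated by the quotient norm: for every a ∈ A_R and every k ∈ K_ω one has Γ(a) ≤ ‖a + k‖; equivalently, Γ(a) ≤ dist(a, K_ω) = inf{‖a + k‖ : k ∈ K_ω}. -/
open ComplexOrder

/-- `Γ(a) = sup { |ω (x * a)| : x ∈ A_L, 0 ≤ x, ω x = 1 }`. -/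
noncomputable def Gamma {C : Type*} [NormedRing C] [StarRing C] [NormedAlgebra ℂ C]
    [StarModule ℂ C] [PartialOrder C] [StarOrderedRing C]
    (AL : StarSubalgebra ℂ C) (ω : C →ₗ[ℂ] ℂ) (a : C) : ℝ :=
  sSup {r : ℝ | ∃ x ∈ AL, 0 ≤ x ∧ ω x = 1 ∧ r = ‖ω (x * a)‖}

/-! For `x ≥ 0` in `A_L` and `b = a + k`, the kernel condition gives `ω (x * a) = ω (x * b)`.
Since `x` commutes with `b`, so does `s = √x`, and `ω (x * b) = ω (s * b * s)` is the GNS inner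
product `⟪s, b s⟫`; Cauchy–Schwarz and `‖b s‖ ≤ ‖b‖ ‖s‖` bound it by `‖b‖ ω x = ‖b‖`. -/

namespace PositiveLinearMap

variable {A : Type*} [NonUnitalCStarAlgebra A] [PartialOrder A] [StarOrderedRing A]

def ofNonnegStarMulSelf (ω : A →ₗ[ℂ] ℂ) (hω : ∀ a, 0 ≤ ω (star a * a)) : A →ₚ[ℂ] ℂ :=
  mk₀ ω fun y hy => by
    obtain ⟨s, rfl⟩ := CStarAlgebra.nonneg_iff_eq_star_mul_self.mp hy
    exact hω s

lemma norm_apply_mul_le_of_commute (f : A →ₚ[ℂ] ℂ) {x b : A} (hx : 0 ≤ x) (hxb : Commute x b) :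
    ‖f (x * b)‖ ≤ ‖b‖ * ‖f x‖ := by
  set s := CFC.sqrt x
  have hsb : Commute s b := hxb.cfcₙ_nnreal _
  have hx_eq : x = star s * s := by
    rw [(CFC.sqrt_nonneg x).star_eq, CFC.sqrt_mul_sqrt_self x hx]
  let v := f.toPreGNS s
  have hinner : f (x * b) = inner ℂ v (f.leftMulMapPreGNS b v) := by
    rw [preGNS_inner_def, leftMulMapPreGNS_apply]
    simp [v, hx_eq, mul_assoc, hsb.eq]
  have hnorm : ‖v‖ ^ 2 = ‖f x‖ := by
    rw [hx_eq, ← f.ofPreGNS_toPreGNS s, ← preGNS_norm_sq]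
    norm_cast
    exact (Real.norm_of_nonneg (sq_nonneg _)).symm
  calc ‖f (x * b)‖ ≤ ‖v‖ * ‖f.leftMulMapPreGNS b v‖ := hinner ▸ norm_inner_le_norm _ _
    _ ≤ ‖v‖ * (‖b‖ * ‖v‖) := by
      gcongr
      exact (f.leftMulMapPreGNS b).le_of_opNorm_le
        (LinearMap.mkContinuous_norm_le _ (norm_nonneg _) _) v
    _ = ‖b‖ * ‖f x‖ := by rw [← hnorm]; ring

end PositiveLinearMap

lemma Gamma_add_of_mem_entKer {C : Type*} [NormedRing C] [StarRing C] [NormedAlgebra ℂ C]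
    [StarModule ℂ C] [PartialOrder C] [StarOrderedRing C] {AL AR : StarSubalgebra ℂ C}
    {ω : C →ₗ[ℂ] ℂ} (a : C) {k : C} (hk : k ∈ entKer AL AR ω) :
    Gamma AL ω (a + k) = Gamma AL ω a := by
  unfold Gamma
  congr 1
  ext r
  refine exists_congr fun x => and_congr_right fun hx => ?_
  rw [mul_add, map_add, hk.2 x hx, add_zero]

lemma Gamma_le_norm {A : Type*} [CStarAlgebra A] [PartialOrder A] [StarOrderedRing A]
    (AL : StarSubalgebra ℂ A) {ω : A →ₗ[ℂ] ℂ} (hω : ∀ a, 0 ≤ ω (star a * a)) {b : A}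
    (hb : ∀ x ∈ AL, Commute x b) : Gamma AL ω b ≤ ‖b‖ := by
  refine Real.sSup_le ?_ (norm_nonneg b)
  rintro r ⟨x, hxAL, hx, hx1, rfl⟩
  have : ‖ω (x * b)‖ ≤ ‖b‖ * ‖ω x‖ :=
    (PositiveLinearMap.ofNonnegStarMulSelf ω hω).norm_apply_mul_le_of_commute hx (hb x hxAL)
  simpa [hx1] using this

theorem Gamma_le_quotient_norm_general {C : Type*} [NormedRing C] [StarRing C] [CStarRing C]
    [NormedAlgebra ℂ C] [StarModule ℂ C] [CompleteSpace C]
    [PartialOrder C] [StarOrderedRing C]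
    (AL AR : StarSubalgebra ℂ C)
    (ω : C →ₗ[ℂ] ℂ) (hω : IsState ω)
    (hcomm : ∀ x ∈ AL, ∀ y ∈ AR, x * y = y * x) :
    ∀ a ∈ AR,
      (∀ k ∈ entKer AL AR ω, Gamma AL ω a ≤ ‖a + k‖) ∧
      Gamma AL ω a ≤ sInf {r : ℝ | ∃ k ∈ entKer AL AR ω, r = ‖a + k‖} := by
  let _ : CStarAlgebra C := { }
  intro a ha
  have hle : ∀ k ∈ entKer AL AR ω, Gamma AL ω a ≤ ‖a + k‖ := fun k hk =>
    Gamma_add_of_mem_entKer a hk ▸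
      Gamma_le_norm AL hω.2 fun x hx => hcomm x hx _ (add_mem ha hk.1)
  refine ⟨hle, le_csInf ⟨‖a + 0‖, 0, ⟨zero_mem _, fun x _ => ?_⟩, rfl⟩ ?_⟩
  · rw [mul_zero, map_zero]
  · rintro r ⟨k, hk, rfl⟩
    exact hle k hk

/-- `Γ` is dominated by the quotient norm: `Γ(a) ≤ ‖a + k‖` for every `k ∈ K_ω`;
equivalently, `Γ(a) ≤ dist (a, K_ω) = inf {‖a + k‖ : k ∈ K_ω}`. -/
theorem Gamma_le_quotient_norm {C : Type*} [NormedRing C] [StarRing C] [CStarRing C]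
    [NormedAlgebra ℂ C] [StarModule ℂ C] [CompleteSpace C]
    [PartialOrder C] [StarOrderedRing C]
    (AL AR : StarSubalgebra ℂ C)
    (hL : IsClosed (AL : Set C)) (hR : IsClosed (AR : Set C))
    (ω : C →ₗ[ℂ] ℂ) (hω : IsState ω)
    (hcomm : ∀ x ∈ AL, ∀ y ∈ AR, x * y = y * x) :
    ∀ a ∈ AR,
      (∀ k ∈ entKer AL AR ω, Gamma AL ω a ≤ ‖a + k‖) ∧
      Gamma AL ω a ≤ sInf {r : ℝ | ∃ k ∈ entKer AL AR ω, r = ‖a + k‖} :=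
  Gamma_le_quotient_norm_general AL AR ω hω hcomm
end

section
/- Let S : C → C be a *-algebra automorphism (a bijective, unital, multiplicative, star-preserving ℂ-linear map) such that ω ∘ S = ω and S⁻¹(A_L) ⊆ A_L. Then for every a ∈ A_L and every k ∈ K_ω such that S(a * k) ∈ A_R, one has S(a * k) ∈ K_ω. (This is the well-definedness, on classes modulo the entanglement kernel, of the generating bilinear map E(a, ⌊a_R⌋) = ⌊S(a · a_R)⌋ of Fannes–Nachtergaele–Werner.) -/
open ComplexOrder

theorem StarAlgEquiv.apply_mul_apply_eq_of_invariant {R A B : Type*} [CommSemiring R]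
    [Semiring A] [Star A] [Algebra R A] (S : A ≃⋆ₐ[R] A) (f : A → B)
    (hf : ∀ a, f (S a) = f a) (x b : A) :
    f (x * S b) = f (S.symm x * b) := by
  rw [← hf (S.symm x * b), map_mul, StarAlgEquiv.apply_symm_apply]

theorem generating_map_wellDefined_general {C : Type*} [NormedRing C] [StarRing C]
    [NormedAlgebra ℂ C] [StarModule ℂ C]
    (AL AR : StarSubalgebra ℂ C)
    (ω : C →ₗ[ℂ] ℂ)
    (S : C ≃⋆ₐ[ℂ] C)
    (hinv : ∀ a : C, ω (S a) = ω a)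
    (hSL : ∀ x ∈ AL, S.symm x ∈ AL) :
    ∀ a ∈ AL, ∀ k ∈ entKer AL AR ω, S (a * k) ∈ AR → S (a * k) ∈ entKer AL AR ω := by
  intro a ha k hk hSak
  refine ⟨hSak, fun x hx => ?_⟩
  rw [S.apply_mul_apply_eq_of_invariant ω hinv, ← mul_assoc]
  exact hk.2 _ (AL.mul_mem (hSL x hx) ha)

/-- Well-definedness of the Fannes–Nachtergaele–Werner generating bilinear map
`E(a, ⌊a_R⌋) = ⌊S (a * a_R)⌋` on classes modulo the entanglement kernel: if `S` is a
`*`-algebra automorphism preserving `ω` with `S⁻¹ (A_L) ⊆ A_L`, then for `a ∈ A_L` and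
`k ∈ K_ω` with `S (a * k) ∈ A_R`, one has `S (a * k) ∈ K_ω`. -/
theorem generating_map_wellDefined {C : Type*} [NormedRing C] [StarRing C] [CStarRing C]
    [NormedAlgebra ℂ C] [StarModule ℂ C] [CompleteSpace C]
    (AL AR : StarSubalgebra ℂ C)
    (hL : IsClosed (AL : Set C)) (hR : IsClosed (AR : Set C))
    (ω : C →ₗ[ℂ] ℂ) (hω : IsState ω)
    (S : C ≃⋆ₐ[ℂ] C)
    (hinv : ∀ a : C, ω (S a) = ω a)
    (hSL : ∀ x ∈ AL, S.symm x ∈ AL) :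
    ∀ a ∈ AL, ∀ k ∈ entKer AL AR ω, S (a * k) ∈ AR → S (a * k) ∈ entKer AL AR ω :=
  generating_map_wellDefined_general AL AR ω S hinv hSL
end

section
/- Let S_R : C → C be a unital *-algebra homomorphism with S_R(A_R) ⊆ A_R. Assume: (clustering) for every ε > 0 there exists r₀ such that for all r ≥ r₀, all a_L ∈ A_L and all a_R ∈ A_R, |ω(a_L * S_R^{∘r}(a_R)) − ω(a_L)·ω(a_R)| ≤ ε·‖a_L‖·‖a_R‖; and (lower bound) there exists c > 0 such that for every a ∈ A_R, c · dist(a, K_ω) ≤ sup{ |ω(x * a)| : x ∈ A_L, ‖x‖ ≤ 1 }. Then for every a ∈ A_R, dist(S_R^{∘r}(a) − ω(a)·1, K_ω) → 0 as r → ∞; that is, in the quotient A_R / K_ω the iterates of the induced shift map converge pointwise to ω(a)·⌊1⌋, so the line spanned by the class of the unit is the only attractor of the induced shift. -/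
open ComplexOrder

/-- The quotient norm (distance to the entanglement kernel):
`dist (a, K_ω) = inf { ‖a + k‖ : k ∈ K_ω }`. -/
noncomputable def quotDist {C : Type*} [NormedRing C] [StarRing C] [NormedAlgebra ℂ C]
    [StarModule ℂ C] (AL AR : StarSubalgebra ℂ C) (ω : C →ₗ[ℂ] ℂ) (a : C) : ℝ :=
  sInf {r : ℝ | ∃ k ∈ entKer AL AR ω, r = ‖a + k‖}

open Filter Topology

/-! Clustering makes `ω (x * (S^[r] a - ω a • 1)) = ω (x * S^[r] a) - ω x * ω a` uniformly small
over the unit ball of `A_L`, i.e. the supremum on the right of the lower bound tends to `0`;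
the lower bound turns this into the decay of the quotient norm. -/

theorem LinearMap.map_mul_sub_smul_one {R A : Type*} [CommRing R] [Ring A] [Algebra R A]
    (ω : A →ₗ[R] R) (x y : A) (z : R) : ω (x * (y - z • 1)) = ω (x * y) - ω x * z := by
  rw [mul_sub, mul_smul_comm, mul_one, map_sub, map_smul, smul_eq_mul, mul_comm]

section

variable {C : Type*} [NormedRing C] [StarRing C] [NormedAlgebra ℂ C] [StarModule ℂ C]
  {AL AR : StarSubalgebra ℂ C} {ω : C →ₗ[ℂ] ℂ}

theorem quotDist_nonneg (a : C) : 0 ≤ quotDist AL AR ω a :=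
  Real.sInf_nonneg (by rintro _ ⟨k, -, rfl⟩; exact norm_nonneg _)

theorem quotDist_le_div_of_forall_norm_le {c M : ℝ} (hc : 0 < c) (hM : 0 ≤ M) {b : C}
    (hlow : c * quotDist AL AR ω b ≤ sSup {r : ℝ | ∃ x ∈ AL, ‖x‖ ≤ 1 ∧ r = ‖ω (x * b)‖})
    (hbound : ∀ x ∈ AL, ‖x‖ ≤ 1 → ‖ω (x * b)‖ ≤ M) :
    quotDist AL AR ω b ≤ M / c := by
  rw [le_div_iff₀' hc]
  exact hlow.trans (Real.sSup_le (by rintro _ ⟨x, hx, hx1, rfl⟩; exact hbound x hx hx1) hM)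

theorem tendsto_quotDist_sub_smul_one {c : ℝ} (hc : 0 < c)
    (hlow : ∀ b ∈ AR, c * quotDist AL AR ω b ≤
      sSup {r : ℝ | ∃ x ∈ AL, ‖x‖ ≤ 1 ∧ r = ‖ω (x * b)‖})
    {a : C} {u : ℕ → C} (hu : ∀ r, u r ∈ AR)
    (hcluster : ∀ ε : ℝ, 0 < ε → ∃ r₀ : ℕ, ∀ r ≥ r₀, ∀ x ∈ AL,
      ‖ω (x * u r) - ω x * ω a‖ ≤ ε * ‖x‖ * ‖a‖) :
    Tendsto (fun r => quotDist AL AR ω (u r - ω a • (1 : C))) atTop (𝓝 0) := by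
  refine tendsto_order.2 ⟨fun δ hδ => .of_forall fun r => hδ.trans_le (quotDist_nonneg _),
    fun δ hδ => ?_⟩
  set ε := c * δ / (‖a‖ + 1)
  obtain ⟨r₀, hr₀⟩ := hcluster ε (by positivity)
  filter_upwards [eventually_ge_atTop r₀] with r hr
  have hbound : ∀ x ∈ AL, ‖x‖ ≤ 1 → ‖ω (x * (u r - ω a • 1))‖ ≤ ε * ‖a‖ := fun x hx hx1 =>
    calc ‖ω (x * (u r - ω a • 1))‖ = ‖ω (x * u r) - ω x * ω a‖ := by
          rw [ω.map_mul_sub_smul_one]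
      _ ≤ ε * ‖x‖ * ‖a‖ := hr₀ r hr x hx
      _ ≤ ε * 1 * ‖a‖ := by gcongr
      _ = ε * ‖a‖ := by rw [mul_one]
  have hmem : u r - ω a • (1 : C) ∈ AR := sub_mem (hu r) (SMulMemClass.smul_mem _ (one_mem AR))
  calc quotDist AL AR ω (u r - ω a • 1)
      ≤ ε * ‖a‖ / c := quotDist_le_div_of_forall_norm_le hc (by positivity) (hlow _ hmem) hbound
    _ = δ * (‖a‖ / (‖a‖ + 1)) := by simp only [ε]; field_simp
    _ < δ := mul_lt_of_lt_one_right hδ ((div_lt_one (by positivity)).2 (lt_add_one _))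

end

theorem shift_iterates_tendsto_general {C : Type*} [NormedRing C] [StarRing C]
    [NormedAlgebra ℂ C] [StarModule ℂ C]
    (AL AR : StarSubalgebra ℂ C)
    (ω : C →ₗ[ℂ] ℂ)
    (S : C →⋆ₐ[ℂ] C) (hSR : ∀ a ∈ AR, S a ∈ AR)
    (hcluster : ∀ ε : ℝ, 0 < ε → ∃ r₀ : ℕ, ∀ r ≥ r₀, ∀ aL ∈ AL, ∀ aR ∈ AR,
      ‖ω (aL * (⇑S)^[r] aR) - ω aL * ω aR‖ ≤ ε * ‖aL‖ * ‖aR‖)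
    (hlow : ∃ c : ℝ, 0 < c ∧ ∀ a ∈ AR, c * quotDist AL AR ω a ≤
      sSup {r : ℝ | ∃ x ∈ AL, ‖x‖ ≤ 1 ∧ r = ‖ω (x * a)‖}) :
    ∀ a ∈ AR,
      Filter.Tendsto (fun r : ℕ => quotDist AL AR ω ((⇑S)^[r] a - ω a • (1 : C)))
        Filter.atTop (nhds 0) := by
  intro a ha
  obtain ⟨c, hc, hlow⟩ := hlow
  exact tendsto_quotDist_sub_smul_one hc hlow (fun r => Set.MapsTo.iterate hSR r ha)
    fun ε hε => (hcluster ε hε).imp fun _ h r hr x hx => h r hr x hx a ha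

/-- Under the asymptotic clustering property and the lower bound on the functional
`Γ`, the iterates of the induced shift map on `A_R / K_ω` converge pointwise to
`ω(a) • ⌊1⌋`: the line spanned by the class of the unit is the only attractor. -/
theorem shift_iterates_tendsto {C : Type*} [NormedRing C] [StarRing C] [CStarRing C]
    [NormedAlgebra ℂ C] [StarModule ℂ C] [CompleteSpace C]
    (AL AR : StarSubalgebra ℂ C)
    (hL : IsClosed (AL : Set C)) (hR : IsClosed (AR : Set C))
    (ω : C →ₗ[ℂ] ℂ) (hω : IsState ω)
    (S : C →⋆ₐ[ℂ] C) (hSR : ∀ a ∈ AR, S a ∈ AR)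
    (hcluster : ∀ ε : ℝ, 0 < ε → ∃ r₀ : ℕ, ∀ r ≥ r₀, ∀ aL ∈ AL, ∀ aR ∈ AR,
      ‖ω (aL * (⇑S)^[r] aR) - ω aL * ω aR‖ ≤ ε * ‖aL‖ * ‖aR‖)
    (hlow : ∃ c : ℝ, 0 < c ∧ ∀ a ∈ AR, c * quotDist AL AR ω a ≤
      sSup {r : ℝ | ∃ x ∈ AL, ‖x‖ ≤ 1 ∧ r = ‖ω (x * a)‖}) :
    ∀ a ∈ AR,
      Filter.Tendsto (fun r : ℕ => quotDist AL AR ω ((⇑S)^[r] a - ω a • (1 : C)))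
        Filter.atTop (nhds 0) :=
  shift_iterates_tendsto_general AL AR ω S hSR hcluster hlow
end

section
/- Every bounded operator on H expands weakly in terms of the Z-operators: for every continuous linear operator A : H → H and all vectors v, w ∈ H̃, the iterated sums satisfy ∑_{i ∈ I} ( ∑_{j ∈ I} ⟪δ_i, A δ_j⟫ · ⟪v, (Z_i ∘ (Z_j)*) w⟫ ) = ⟪v, ι(A) w⟫, where both the inner sum (over j, for each fixed i) and the outer sum (over i) converge; this expresses the weak expansion A = ∑_{i,j} ⟪δ_i, A δ_j⟫ Z_i Z_j*. -/
/-- For `ψ ∈ H`, the operator `Z_ψ : H̃ → H̃`, `(α, u) ↦ (0, α • ψ)`, on the Hilbert space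
direct sum `H̃ = ℂ ⊕ H` (realized as `WithLp 2 (ℂ × H)`). -/
noncomputable def Zop {H : Type*} [NormedAddCommGroup H] [InnerProductSpace ℂ H] (ψ : H) :
    WithLp 2 (ℂ × H) →L[ℂ] WithLp 2 (ℂ × H) :=
  ((WithLp.prodContinuousLinearEquiv (p := 2) (𝕜 := ℂ) (α := ℂ) (β := H)).symm :
      ℂ × H →L[ℂ] WithLp 2 (ℂ × H)) ∘L
    (ContinuousLinearMap.inr ℂ ℂ H) ∘L (ContinuousLinearMap.toSpanSingleton ℂ ψ) ∘L
    (ContinuousLinearMap.fst ℂ ℂ H) ∘L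
    ((WithLp.prodContinuousLinearEquiv (p := 2) (𝕜 := ℂ) (α := ℂ) (β := H)) :
      WithLp 2 (ℂ × H) →L[ℂ] ℂ × H)

/-- The embedding `ι : B(H) → B(H̃)`, sending `A` to the operator `(α, u) ↦ (0, A u)`. -/
noncomputable def iotaOp {H : Type*} [NormedAddCommGroup H] [InnerProductSpace ℂ H]
    (A : H →L[ℂ] H) : WithLp 2 (ℂ × H) →L[ℂ] WithLp 2 (ℂ × H) :=
  ((WithLp.prodContinuousLinearEquiv (p := 2) (𝕜 := ℂ) (α := ℂ) (β := H)).symm :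
      ℂ × H →L[ℂ] WithLp 2 (ℂ × H)) ∘L
    (ContinuousLinearMap.inr ℂ ℂ H) ∘L A ∘L
    (ContinuousLinearMap.snd ℂ ℂ H) ∘L
    ((WithLp.prodContinuousLinearEquiv (p := 2) (𝕜 := ℂ) (α := ℂ) (β := H)) :
      WithLp 2 (ℂ × H) →L[ℂ] ℂ × H)

/-
The operator `Z_φ Z_ψ*` is the rank-one map `w ↦ (0, ⟪ψ, w₂⟫ φ)`, so
`⟪v, Z_i Z_j* w⟫ = ⟪δ_j, w₂⟫ ⟪v₂, δ_i⟫`. Summing over `j` first, Parseval in the form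
`∑_j ⟪x, A δ_j⟫ ⟪δ_j, y⟫ = ⟪x, A y⟫` gives `⟪δ_i, A w₂⟫ ⟪v₂, δ_i⟫`; summing over `i`,
Parseval once more gives `⟪v₂, A w₂⟫ = ⟪v, ι(A) w⟫`.
-/

open scoped InnerProductSpace
open ContinuousLinearMap

theorem HilbertBasis.hasSum_inner_mul_inner_apply {ι 𝕜 E F : Type*} [RCLike 𝕜]
    [NormedAddCommGroup E] [InnerProductSpace 𝕜 E] [NormedAddCommGroup F]
    [InnerProductSpace 𝕜 F] (b : HilbertBasis ι 𝕜 E) (A : E →L[𝕜] F) (x : F) (y : E) :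
    HasSum (fun j => ⟪x, A (b j)⟫_𝕜 * ⟪b j, y⟫_𝕜) ⟪x, A y⟫_𝕜 := by
  convert (b.hasSum_repr y).mapL (innerSL 𝕜 x ∘L A) using 1
  · ext j
    rw [comp_apply, map_smul, innerSL_apply_apply, b.repr_apply_apply, inner_smul_right,
      mul_comm]
  · rfl

section
variable {H : Type*} [NormedAddCommGroup H] [InnerProductSpace ℂ H]

theorem inner_Zop_apply (φ : H) (v y : WithLp 2 (ℂ × H)) :
    ⟪v, Zop φ y⟫_ℂ = y.fst * ⟪v.snd, φ⟫_ℂ := by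
  simp [Zop, WithLp.prod_inner_apply, inner_smul_right]

theorem inner_iotaOp_apply (A : H →L[ℂ] H) (v w : WithLp 2 (ℂ × H)) :
    ⟪v, iotaOp A w⟫_ℂ = ⟪v.snd, A w.snd⟫_ℂ := by
  simp [iotaOp, WithLp.prod_inner_apply]

variable [CompleteSpace H]

theorem adjoint_Zop_apply_fst (ψ : H) (w : WithLp 2 (ℂ × H)) :
    (adjoint (Zop ψ) w).fst = ⟪ψ, w.snd⟫_ℂ := by
  have fst_eq_inner (y : WithLp 2 (ℂ × H)) : y.fst = ⟪WithLp.toLp 2 (1, 0), y⟫_ℂ := by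
    simp [WithLp.prod_inner_apply]
  rw [fst_eq_inner, adjoint_inner_right]
  simp [Zop, WithLp.prod_inner_apply]

theorem inner_Zop_comp_adjoint_Zop_apply (φ ψ : H) (v w : WithLp 2 (ℂ × H)) :
    ⟪v, (Zop φ ∘L adjoint (Zop ψ)) w⟫_ℂ = ⟪ψ, w.snd⟫_ℂ * ⟪v.snd, φ⟫_ℂ := by
  rw [comp_apply, inner_Zop_apply, adjoint_Zop_apply_fst]

end

/-- The weak expansion `A = ∑_{i,j} ⟪δ_i, A δ_j⟫ Z_i Z_j*`: for all `v, w ∈ H̃`, the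
iterated sums `∑_i ∑_j ⟪δ_i, A δ_j⟫ ⟪v, Z_i Z_j* w⟫` converge (the inner one for each
fixed `i`) and add up to `⟪v, ι(A) w⟫`. -/
theorem weak_expansion {H : Type*} [NormedAddCommGroup H] [InnerProductSpace ℂ H]
    [CompleteSpace H] {I : Type*} (b : HilbertBasis I ℂ H)
    (A : H →L[ℂ] H) (v w : WithLp 2 (ℂ × H)) :
    (∀ i : I, Summable fun j : I =>
        (@inner ℂ _ _ (b i) (A (b j))) *
          @inner ℂ _ _ v ((Zop (b i) ∘L ContinuousLinearMap.adjoint (Zop (b j))) w)) ∧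
    HasSum
      (fun i : I => ∑' j : I,
        (@inner ℂ _ _ (b i) (A (b j))) *
          @inner ℂ _ _ v ((Zop (b i) ∘L ContinuousLinearMap.adjoint (Zop (b j))) w))
      (@inner ℂ _ _ v (iotaOp A w)) := by
  have row_hasSum : ∀ i, HasSum (fun j => ⟪b i, A (b j)⟫_ℂ *
      ⟪v, (Zop (b i) ∘L adjoint (Zop (b j))) w⟫_ℂ) (⟪b i, A w.snd⟫_ℂ * ⟪v.snd, b i⟫_ℂ) := by
    intro i
    simpa only [inner_Zop_comp_adjoint_Zop_apply, mul_assoc] using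
      (b.hasSum_inner_mul_inner_apply A (b i) w.snd).mul_right ⟪v.snd, b i⟫_ℂ
  refine ⟨fun i => (row_hasSum i).summable, ?_⟩
  simpa only [(row_hasSum _).tsum_eq, inner_iotaOp_apply, mul_comm] using
    b.hasSum_inner_mul_inner v.snd (A w.snd)
end
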